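/- arXiv:1006.5025 — 4 statements merged into one kernel-verified Lean document; each statement's English description precedes it below -/
import Mathlib

section
/- Fix real numbers ω, ε, let ψ, Γ : ℝ → ℝ with ψ continuous and Γ continuous, set β(t) := Real.exp(−∫ s in (0)..t, Γ(s)) (so that β'(t)/β(t) = −Γ(t) and β(t) > 0), let α : ℝ → ℝ be differentiable, and define γ(t) := β(t)⁻¹·(−ω^2 − ε·ψ(t) − α'(t) − α(t)^2 + β'(t)·α(t)/β(t)). If y, z : ℝ → ℝ are differentiable and satisfy the traceless system y'(t) = α(t)·y(t) + β(t)·z(t), z'(t) = γ(t)·y(t) − α(t)·z(t) for all t, then y is twice differentiable and satisfies the damped Mathieu equation y''(t) + Γ(t)·y'(t) + (ω^2 + ε·ψ(t))·y(t) = 0 for all t. -/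
/-!
Differentiating `ẏ = αy + βz` once more and eliminating `z = (ẏ - αy)/β` turns any traceless
system with `β ≠ 0` into the second-order equation `ÿ = (β̇/β)ẏ + (α̇ + α² - αβ̇/β + βγ)y`.
The choice `β = exp (-∫₀ᵗ Γ)` makes `β̇/β = -Γ` the damping, and `γ` is chosen exactly so that
the coefficient of `y` becomes `-(ω² + εψ)`.
-/

theorem hasDerivAt_deriv_of_traceless_system {𝕜 : Type*} [NontriviallyNormedField 𝕜]
    {α β γ y z : 𝕜 → 𝕜} {t a b : 𝕜} (hα : HasDerivAt α a t) (hβ : HasDerivAt β b t)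
    (hβt : β t ≠ 0) (hy : ∀ s, HasDerivAt y (α s * y s + β s * z s) s)
    (hz : HasDerivAt z (γ t * y t - α t * z t) t) :
    HasDerivAt (deriv y)
      (b / β t * deriv y t + (a + α t ^ 2 - α t * b / β t + β t * γ t) * y t) t := by
  have hdy : deriv y = fun s => α s * y s + β s * z s := funext fun s => (hy s).deriv
  have h : HasDerivAt (fun s => α s * y s + β s * z s)
      (a * y t + α t * (α t * y t + β t * z t) + (b * z t + β t * (γ t * y t - α t * z t))) t :=
    (hα.mul (hy t)).add (hβ.mul hz)
  rw [hdy]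
  refine h.congr_deriv ?_
  field_simp
  ring

theorem hasDerivAt_exp_neg_integral {Γ : ℝ → ℝ} (hΓ : Continuous Γ) (a t : ℝ) :
    HasDerivAt (fun u => Real.exp (-∫ s in a..u, Γ s))
      (-Γ t * Real.exp (-∫ s in a..t, Γ s)) t := by
  have h := (Real.hasDerivAt_exp _).comp t (hΓ.integral_hasStrictDerivAt a t).hasDerivAt.neg
  simpa only [mul_comm, mul_neg, Function.comp_def, Pi.neg_apply] using h

theorem damped_mathieu_from_traceless_system_general
    (ω ε : ℝ) (ψ Γ : ℝ → ℝ) (hΓ : Continuous Γ)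
    (β : ℝ → ℝ)
    (hβ : ∀ t : ℝ, β t = Real.exp (-∫ s in (0 : ℝ)..t, Γ s))
    (α dα : ℝ → ℝ)
    (hα : ∀ t : ℝ, HasDerivAt α (dα t) t)
    (γ : ℝ → ℝ)
    (hγ : ∀ t : ℝ, γ t =
      (β t)⁻¹ * (-ω ^ 2 - ε * ψ t - dα t - α t ^ 2 + deriv β t * α t / β t))
    (y z : ℝ → ℝ)
    (hy : ∀ t : ℝ, HasDerivAt y (α t * y t + β t * z t) t)
    (hz : ∀ t : ℝ, HasDerivAt z (γ t * y t - α t * z t) t) :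
    ∃ ddy : ℝ → ℝ, (∀ t : ℝ, HasDerivAt (deriv y) (ddy t) t) ∧
      ∀ t : ℝ, ddy t + Γ t * deriv y t + (ω ^ 2 + ε * ψ t) * y t = 0 := by
  have hβd : ∀ t, HasDerivAt β (-Γ t * β t) t := by
    rw [funext hβ]
    exact hasDerivAt_exp_neg_integral hΓ 0
  have hβt : ∀ t, β t ≠ 0 := fun t => hβ t ▸ (Real.exp_pos _).ne'
  refine ⟨_, fun t =>
    hasDerivAt_deriv_of_traceless_system (hα t) (hβd t) (hβt t) hy (hz t), fun t => ?_⟩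
  rw [hγ, (hβd t).deriv]
  field_simp [hβt t]
  ring

/-- Realizing the damped Mathieu equation by a traceless linear system: with
`β(t) = exp (-∫₀ᵗ Γ)` and
`γ(t) = β(t)⁻¹·(-ω² - ε·ψ(t) - α̇(t) - α(t)² + β̇(t)·α(t)/β(t))`, any solution
`(y, z)` of the traceless system `ẏ = αy + βz`, `ż = γy - αz` has `y` twice
differentiable and solving the damped Mathieu equation
`ÿ + Γ(t)·ẏ + (ω² + ε·ψ(t))·y = 0`. -/
theorem damped_mathieu_from_traceless_system
    (ω ε : ℝ) (ψ Γ : ℝ → ℝ) (hψ : Continuous ψ) (hΓ : Continuous Γ)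
    (β : ℝ → ℝ)
    (hβ : ∀ t : ℝ, β t = Real.exp (-∫ s in (0 : ℝ)..t, Γ s))
    (α dα : ℝ → ℝ)
    (hα : ∀ t : ℝ, HasDerivAt α (dα t) t)
    (γ : ℝ → ℝ)
    (hγ : ∀ t : ℝ, γ t =
      (β t)⁻¹ * (-ω ^ 2 - ε * ψ t - dα t - α t ^ 2 + deriv β t * α t / β t))
    (y z : ℝ → ℝ)
    (hy : ∀ t : ℝ, HasDerivAt y (α t * y t + β t * z t) t)
    (hz : ∀ t : ℝ, HasDerivAt z (γ t * y t - α t * z t) t) :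
    ∃ ddy : ℝ → ℝ, (∀ t : ℝ, HasDerivAt (deriv y) (ddy t) t) ∧
      ∀ t : ℝ, ddy t + Γ t * deriv y t + (ω ^ 2 + ε * ψ t) * y t = 0 :=
  damped_mathieu_from_traceless_system_general ω ε ψ Γ hΓ β hβ α dα hα γ hγ y z hy hz
end

section
/- Let A : ℝ → Matrix (Fin 2) (Fin 2) ℝ be continuous and Φ : ℝ → Matrix (Fin 2) (Fin 2) ℝ be differentiable with Φ'(t) = A(t) * Φ(t) for all t and Φ(t) invertible for all t. Let g : ℝ → ℝ be differentiable, η ∈ ℝ, and define H(t) := (η·g'(t)) • (Φ(t) * J * Φ(t)⁻¹), where J := ![![0,−1],![1,0]]. Then the curve v(t) := Φ(t) * R_{η·g(t)} satisfies the perturbed linear variational equation v'(t) = (A(t) + H(t)) * v(t) for all t; moreover trace (H(t)) = 0 for all t, H(t) = 0 whenever g'(t) = 0, and if g(1) = 1 then v(1) = Φ(1) * R_η. -/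
attribute [local instance] Matrix.normedAddCommGroup Matrix.normedSpace

/-- The rotation matrix of angle `θ`. -/
noncomputable def Rot (θ : ℝ) : Matrix (Fin 2) (Fin 2) ℝ :=
  !![Real.cos θ, -Real.sin θ; Real.sin θ, Real.cos θ]

/-- The infinitesimal generator of rotations. -/
def Jmat : Matrix (Fin 2) (Fin 2) ℝ := !![0, -1; 1, 0]

/-!
Since `Rot' = J * Rot`, the product rule gives `v' = A Φ R + η ġ Φ J R`, and
`Φ J R = (Φ J Φ⁻¹) (Φ R)`, so `v' = (A + H) v`. The perturbation `H` is traceless because it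
is a multiple of a conjugate of the traceless `J`.
-/

section MatrixDeriv

variable {𝕜 : Type*} [NontriviallyNormedField 𝕜] {l m n : Type*} [Fintype n] {x : 𝕜}

theorem HasDerivAt.matrix_apply {f : 𝕜 → Matrix m n 𝕜} {f' : Matrix m n 𝕜}
    (hf : HasDerivAt f f' x) (i : m) (j : n) : HasDerivAt (fun y => f y i j) (f' i j) x :=
  hasDerivAt_pi.1 (hasDerivAt_pi.1 hf i) j

theorem HasDerivAt.matrix_mul [Fintype l] [Fintype m] {f : 𝕜 → Matrix l m 𝕜} {g : 𝕜 → Matrix m n 𝕜}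
    {f' : Matrix l m 𝕜} {g' : Matrix m n 𝕜} (hf : HasDerivAt f f' x) (hg : HasDerivAt g g' x) :
    HasDerivAt (fun y => f y * g y) (f' * g x + f x * g') x := by
  refine hasDerivAt_pi.2 fun i => hasDerivAt_pi.2 fun k => ?_
  simp only [Matrix.add_apply, Matrix.mul_apply, ← Finset.sum_add_distrib]
  exact HasDerivAt.fun_sum fun j _ => (hf.matrix_apply i j).fun_mul (hg.matrix_apply j k)

end MatrixDeriv

theorem Jmat_mul_Jmat : Jmat * Jmat = -1 := by
  ext i j
  fin_cases i <;> fin_cases j <;> simp [Jmat]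

theorem trace_Jmat : Jmat.trace = 0 := by
  simp [Jmat, Matrix.trace_fin_two]

theorem Rot_eq_cos_smul_one_add_sin_smul_Jmat (θ : ℝ) :
    Rot θ = Real.cos θ • 1 + Real.sin θ • Jmat := by
  ext i j
  fin_cases i <;> fin_cases j <;> simp [Rot, Jmat]

theorem hasDerivAt_Rot (θ : ℝ) : HasDerivAt Rot (Jmat * Rot θ) θ := by
  have h := ((Real.hasDerivAt_cos θ).smul_const (1 : Matrix (Fin 2) (Fin 2) ℝ)).fun_add
    ((Real.hasDerivAt_sin θ).smul_const Jmat)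
  rw [funext Rot_eq_cos_smul_one_add_sin_smul_Jmat]
  refine h.congr_deriv ?_
  rw [Matrix.mul_add, Matrix.mul_smul, Matrix.mul_smul, Matrix.mul_one, Jmat_mul_Jmat]
  module

theorem rotation_perturbation_general
    (A Φ : ℝ → Matrix (Fin 2) (Fin 2) ℝ)
    (hΦ : ∀ t : ℝ, HasDerivAt Φ (A t * Φ t) t)
    (hΦinv : ∀ t : ℝ, IsUnit (Φ t))
    (g dg : ℝ → ℝ)
    (hg : ∀ t : ℝ, HasDerivAt g (dg t) t)
    (η : ℝ)
    (H : ℝ → Matrix (Fin 2) (Fin 2) ℝ)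
    (hH : ∀ t : ℝ, H t = (η * dg t) • (Φ t * Jmat * (Φ t)⁻¹)) :
    (∀ t : ℝ, HasDerivAt (fun s : ℝ => Φ s * Rot (η * g s))
        ((A t + H t) * (Φ t * Rot (η * g t))) t) ∧
      (∀ t : ℝ, (H t).trace = 0) ∧
      (∀ t : ℝ, dg t = 0 → H t = 0) ∧
      (g 1 = 1 → Φ 1 * Rot (η * g 1) = Φ 1 * Rot η) := by
  refine ⟨fun t => ?_, fun t => ?_, fun t ht => by simp [hH, ht], fun h1 => by rw [h1, mul_one]⟩
  · have hdet : IsUnit (Φ t).det := (Matrix.isUnit_iff_isUnit_det _).1 (hΦinv t)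
    have hrot : HasDerivAt (fun s => Rot (η * g s)) ((η * dg t) • (Jmat * Rot (η * g t))) t :=
      (hasDerivAt_Rot _).scomp t ((hg t).const_mul η)
    convert (hΦ t).matrix_mul hrot using 1
    simp only [hH, add_mul, Matrix.smul_mul, Matrix.mul_smul, Matrix.mul_assoc,
      Matrix.nonsing_inv_mul_cancel_left _ _ hdet]
  · rw [hH, Matrix.trace_smul, Matrix.trace_conj (hΦinv t), trace_Jmat, smul_zero]

/-- The core construction of the rotation-perturbation lemma: if `Φ` solves
`Φ' = A·Φ` with `Φ t` invertible, `g` is differentiable and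
`H(t) = (η·ġ(t)) • (Φ(t) * J * Φ(t)⁻¹)`, then `v(t) = Φ(t) * R_{η·g(t)}` solves the
perturbed equation `v' = (A + H)·v`; moreover `H` is traceless, `H(t) = 0` wherever
`ġ(t) = 0`, and if `g 1 = 1` then `v 1 = Φ(1) * R_η`. -/
theorem rotation_perturbation
    (A Φ : ℝ → Matrix (Fin 2) (Fin 2) ℝ)
    (hA : Continuous A)
    (hΦ : ∀ t : ℝ, HasDerivAt Φ (A t * Φ t) t)
    (hΦinv : ∀ t : ℝ, IsUnit (Φ t))
    (g dg : ℝ → ℝ)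
    (hg : ∀ t : ℝ, HasDerivAt g (dg t) t)
    (η : ℝ)
    (H : ℝ → Matrix (Fin 2) (Fin 2) ℝ)
    (hH : ∀ t : ℝ, H t = (η * dg t) • (Φ t * Jmat * (Φ t)⁻¹)) :
    (∀ t : ℝ, HasDerivAt (fun s : ℝ => Φ s * Rot (η * g s))
        ((A t + H t) * (Φ t * Rot (η * g t))) t) ∧
      (∀ t : ℝ, (H t).trace = 0) ∧
      (∀ t : ℝ, dg t = 0 → H t = 0) ∧
      (g 1 = 1 → Φ 1 * Rot (η * g 1) = Φ 1 * Rot η) :=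
  rotation_perturbation_general A Φ hΦ hΦinv g dg hg η H hH
end

section
/- Fix real numbers ω, ε, η with ε ≠ 0, let ψ, F, G, H : ℝ → ℝ be differentiable, let g : ℝ → ℝ be twice differentiable, and suppose 1 − η·g'(t)·G(t) ≠ 0 for all t. Define the traceless matrix B(t) := ![![η·g'(t)·F(t), 1 − η·g'(t)·G(t)], ![−ω^2 − ε·ψ(t) + η·g'(t)·H(t), −η·g'(t)·F(t)]], and define Γ_η(t) := (η·g''(t)·G(t) + η·g'(t)·G'(t)) / (1 − η·g'(t)·G(t)) and Θ_η(t) := −η·g''(t)·F(t) − (g''(t)·G(t) + g'(t)·G'(t))·η^2·g'(t)·F(t)/(1 − η·g'(t)·G(t)) + η^2·g'(t)^2·(G(t)·H(t) − F(t)^2) − η·g'(t)·(F'(t) + H(t) + ω^2·G(t) + G(t)·ε·ψ(t)). If y, z : ℝ → ℝ are differentiable and satisfy y'(t) = (B(t) 0 0)·y(t) + (B(t) 0 1)·z(t) and z'(t) = (B(t) 1 0)·y(t) + (B(t) 1 1)·z(t) for all t, then y is twice differentiable and satisfies the damped Mathieu equation y''(t) + Γ_η(t)·y'(t) + (ω^2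 + ε·Ψ_η(t))·y(t) = 0 for all t, where Ψ_η(t) := ψ(t) + ε⁻¹·Θ_η(t). -/
/-!
Eliminating `z = (ẏ - a y) / b` from a planar linear system `ẏ = a y + b z`, `ż = c y + d z`
with `b ≠ 0` gives the second-order equation
`ÿ - (a + d + ḃ / b) ẏ + (a (ḃ / b + d) - ȧ - b c) y = 0`.
For the perturbed Mathieu system `d = -a`, `b = 1 - η ġ G`, and the coefficients of this
equation are exactly `Γ_η` and `ω² + ε Ψ_η`.
-/

section LinearSystem

variable {a b c d da db y z : ℝ → ℝ}

theorem hasDerivAt_deriv_of_linear_system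
    (ha : ∀ t, HasDerivAt a (da t) t) (hb : ∀ t, HasDerivAt b (db t) t)
    (hy : ∀ t, HasDerivAt y (a t * y t + b t * z t) t)
    (hz : ∀ t, HasDerivAt z (c t * y t + d t * z t) t) (t : ℝ) :
    HasDerivAt (deriv y)
      (da t * y t + a t * deriv y t + db t * z t + b t * (c t * y t + d t * z t)) t := by
  have hderiv : deriv y = fun t => a t * y t + b t * z t := funext fun t => (hy t).deriv
  rw [(hy t).deriv, hderiv]
  exact (((ha t).mul (hy t)).add ((hb t).mul (hz t))).congr_deriv (by ring)

theorem exists_second_order_of_linear_system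
    (ha : ∀ t, HasDerivAt a (da t) t) (hb : ∀ t, HasDerivAt b (db t) t)
    (hb₀ : ∀ t, b t ≠ 0)
    (hy : ∀ t, HasDerivAt y (a t * y t + b t * z t) t)
    (hz : ∀ t, HasDerivAt z (c t * y t + d t * z t) t) :
    ∃ ddy : ℝ → ℝ, (∀ t, HasDerivAt (deriv y) (ddy t) t) ∧
      ∀ t, ddy t - (a t + d t + db t / b t) * deriv y t
        + (a t * (db t / b t + d t) - da t - b t * c t) * y t = 0 := by
  refine ⟨_, hasDerivAt_deriv_of_linear_system ha hb hy hz, fun t => ?_⟩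
  rw [(hy t).deriv]
  field_simp [hb₀ t]
  ring

end LinearSystem

theorem perturbed_system_damped_mathieu_general
    (ω ε η : ℝ) (hε : ε ≠ 0)
    (ψ F G H : ℝ → ℝ) (dF dG : ℝ → ℝ)
    (hF : ∀ t : ℝ, HasDerivAt F (dF t) t)
    (hG : ∀ t : ℝ, HasDerivAt G (dG t) t)
    (dg ddg : ℝ → ℝ)
    (hdg : ∀ t : ℝ, HasDerivAt dg (ddg t) t)
    (hne : ∀ t : ℝ, 1 - η * dg t * G t ≠ 0)
    (Γη Θη Ψη : ℝ → ℝ)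
    (hΓη : ∀ t : ℝ, Γη t =
      (η * ddg t * G t + η * dg t * dG t) / (1 - η * dg t * G t))
    (hΘη : ∀ t : ℝ, Θη t =
      -(η * ddg t * F t)
        - (ddg t * G t + dg t * dG t) * η ^ 2 * dg t * F t / (1 - η * dg t * G t)
        + η ^ 2 * dg t ^ 2 * (G t * H t - F t ^ 2)
        - η * dg t * (dF t + H t + ω ^ 2 * G t + G t * ε * ψ t))
    (hΨη : ∀ t : ℝ, Ψη t = ψ t + ε⁻¹ * Θη t)
    (y z : ℝ → ℝ)
    (hy : ∀ t : ℝ, HasDerivAt y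
      ((η * dg t * F t) * y t + (1 - η * dg t * G t) * z t) t)
    (hz : ∀ t : ℝ, HasDerivAt z
      ((-ω ^ 2 - ε * ψ t + η * dg t * H t) * y t + (-(η * dg t * F t)) * z t) t) :
    ∃ ddy : ℝ → ℝ, (∀ t : ℝ, HasDerivAt (deriv y) (ddy t) t) ∧
      ∀ t : ℝ, ddy t + Γη t * deriv y t + (ω ^ 2 + ε * Ψη t) * y t = 0 := by
  have ha : ∀ t, HasDerivAt (fun t => η * dg t * F t) (η * (ddg t * F t + dg t * dF t)) t :=
    fun t => (((hdg t).const_mul η).mul (hF t)).congr_deriv (by ring)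
  have hb : ∀ t, HasDerivAt (fun t => 1 - η * dg t * G t) (-(η * (ddg t * G t + dg t * dG t))) t :=
    fun t => ((((hdg t).const_mul η).mul (hG t)).const_sub 1).congr_deriv (by ring)
  obtain ⟨ddy, hddy, hsecond⟩ := exists_second_order_of_linear_system ha hb hne hy hz
  refine ⟨ddy, hddy, fun t => ?_⟩
  have hdamping : Γη t = -(η * dg t * F t + -(η * dg t * F t)
      + -(η * (ddg t * G t + dg t * dG t)) / (1 - η * dg t * G t)) := by
    rw [hΓη]
    ring
  have hstiffness : ω ^ 2 + ε * Ψη t =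
      η * dg t * F t * (-(η * (ddg t * G t + dg t * dG t)) / (1 - η * dg t * G t)
        + -(η * dg t * F t)) - η * (ddg t * F t + dg t * dF t)
        - (1 - η * dg t * G t) * (-ω ^ 2 - ε * ψ t + η * dg t * H t) := by
    rw [hΨη, hΘη]
    field_simp [hne t, hε]
    ring
  rw [hdamping, hstiffness]
  linarith [hsecond t]

/-- Solutions of the perturbed traceless system
`B(t) = ![![η·ġ·F, 1 - η·ġ·G], ![-ω² - ε·ψ + η·ġ·H, -η·ġ·F]]` satisfy a damped
Mathieu equation `ÿ + Γ_η(t)·ẏ + (ω² + ε·Ψ_η(t))·y = 0` with the displayed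
coefficients `Γ_η` and `Ψ_η = ψ + ε⁻¹·Θ_η`. -/
theorem perturbed_system_damped_mathieu
    (ω ε η : ℝ) (hε : ε ≠ 0)
    (ψ F G H : ℝ → ℝ) (dF dG dH : ℝ → ℝ)
    (hψ : Differentiable ℝ ψ)
    (hF : ∀ t : ℝ, HasDerivAt F (dF t) t)
    (hG : ∀ t : ℝ, HasDerivAt G (dG t) t)
    (hH : ∀ t : ℝ, HasDerivAt H (dH t) t)
    (g dg ddg : ℝ → ℝ)
    (hg : ∀ t : ℝ, HasDerivAt g (dg t) t)
    (hdg : ∀ t : ℝ, HasDerivAt dg (ddg t) t)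
    (hne : ∀ t : ℝ, 1 - η * dg t * G t ≠ 0)
    (Γη Θη Ψη : ℝ → ℝ)
    (hΓη : ∀ t : ℝ, Γη t =
      (η * ddg t * G t + η * dg t * dG t) / (1 - η * dg t * G t))
    (hΘη : ∀ t : ℝ, Θη t =
      -(η * ddg t * F t)
        - (ddg t * G t + dg t * dG t) * η ^ 2 * dg t * F t / (1 - η * dg t * G t)
        + η ^ 2 * dg t ^ 2 * (G t * H t - F t ^ 2)
        - η * dg t * (dF t + H t + ω ^ 2 * G t + G t * ε * ψ t))
    (hΨη : ∀ t : ℝ, Ψη t = ψ t + ε⁻¹ * Θη t)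
    (y z : ℝ → ℝ)
    (hy : ∀ t : ℝ, HasDerivAt y
      ((η * dg t * F t) * y t + (1 - η * dg t * G t) * z t) t)
    (hz : ∀ t : ℝ, HasDerivAt z
      ((-ω ^ 2 - ε * ψ t + η * dg t * H t) * y t + (-(η * dg t * F t)) * z t) t) :
    ∃ ddy : ℝ → ℝ, (∀ t : ℝ, HasDerivAt (deriv y) (ddy t) t) ∧
      ∀ t : ℝ, ddy t + Γη t * deriv y t + (ω ^ 2 + ε * Ψη t) * y t = 0 :=
  perturbed_system_damped_mathieu_general ω ε η hε ψ F G H dF dG hF hG dg ddg hdg hne Γη Θη Ψη hΓη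
    hΘη hΨη y z hy hz
end

section
/- Let K ≥ 0 and ε ≥ 0, let A, B : ℝ → Matrix (Fin 2) (Fin 2) ℝ be continuous with ‖A(t)‖ ≤ K and ‖B(t)‖ ≤ K for all t, and ‖A(t) − B(t)‖ ≤ ε for all t. Let Φ_A, Φ_B : ℝ → Matrix (Fin 2) (Fin 2) ℝ be differentiable with Φ_A'(t) = A(t)*Φ_A(t), Φ_B'(t) = B(t)*Φ_B(t) and Φ_A(0) = Φ_B(0) = 1. Then for every t ≥ 0, ‖Φ_A(t) − Φ_B(t)‖ ≤ ε · t · Real.exp(2·K·t). (Gronwall-type estimate: the fundamental solution of a perturbation of a bounded linear differential system stays exponentially close to the original fundamental solution.) -/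
attribute [local instance] Matrix.linftyOpNormedAddCommGroup Matrix.linftyOpNormedRing
  Matrix.linftyOpNormedSpace

/-! Both fundamental solutions grow at most like `exp (K t)`, and their difference `v = ΦA - ΦB`
solves `v' = A v + (A - B) ΦB`, whose forcing term is at most `ε exp (K t)` on `[0, t]`.
Grönwall's inequality with `v 0 = 0` then bounds `‖v t‖` by `∫₀ᵗ ε exp (K t) exp (K s) ds`,
which is at most `ε t exp (2 K t)`. -/

open Real Set

lemma Real.exp_sub_one_le_mul_exp (u : ℝ) : exp u - 1 ≤ u * exp u := by
  have h := mul_le_mul_of_nonneg_right (one_sub_le_exp_neg u) (exp_pos u).le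
  rwa [← exp_add, neg_add_cancel, exp_zero, sub_mul, one_mul, sub_le_comm] at h

lemma gronwallBound_zero_le_mul_exp {K ε : ℝ} (hK : 0 ≤ K) (hε : 0 ≤ ε) (x : ℝ) :
    gronwallBound 0 K ε x ≤ ε * x * exp (K * x) := by
  rcases hK.eq_or_lt with rfl | hK
  · simp [gronwallBound_K0]
  · simp only [gronwallBound_of_K_ne_0 hK.ne', zero_mul, zero_add]
    calc ε / K * (exp (K * x) - 1) ≤ ε / K * (K * x * exp (K * x)) := by
          gcongr; exact exp_sub_one_le_mul_exp _
      _ = ε * x * exp (K * x) := by field_simp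

section LinearODE

variable {R : Type*} [NormedRing R] [NormedSpace ℝ R] {K ε M T : ℝ} {A B Φ Ψ : ℝ → R}

lemma norm_le_mul_exp_of_hasDerivAt_mul (hΦ : ∀ t, HasDerivAt Φ (A t * Φ t) t)
    (hA : ∀ t, ‖A t‖ ≤ K) (hT : 0 ≤ T) : ‖Φ T‖ ≤ ‖Φ 0‖ * exp (K * T) := by
  have h := norm_le_gronwallBound_of_norm_deriv_right_le (ε := 0)
    (fun t _ ↦ (hΦ t).continuousAt.continuousWithinAt) (fun t _ ↦ (hΦ t).hasDerivWithinAt)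
    le_rfl (fun t _ ↦ by grw [norm_mul_le, hA t, add_zero]) T ⟨hT, le_rfl⟩
  simpa [gronwallBound_ε0] using h

lemma norm_sub_le_gronwallBound_of_hasDerivAt_mul (hΦ : ∀ t, HasDerivAt Φ (A t * Φ t) t)
    (hΨ : ∀ t, HasDerivAt Ψ (B t * Ψ t) t) (hA : ∀ t, ‖A t‖ ≤ K) (hAB : ∀ t, ‖A t - B t‖ ≤ ε)
    (hΨM : ∀ t ∈ Icc 0 T, ‖Ψ t‖ ≤ M) (hT : 0 ≤ T) :
    ‖Φ T - Ψ T‖ ≤ gronwallBound ‖Φ 0 - Ψ 0‖ K (ε * M) T := by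
  have hv : ∀ t, HasDerivAt (fun s ↦ Φ s - Ψ s) (A t * (Φ t - Ψ t) + (A t - B t) * Ψ t) t :=
    fun t ↦ ((hΦ t).sub (hΨ t)).congr_deriv (by noncomm_ring)
  have bound : ∀ t ∈ Ico 0 T,
      ‖A t * (Φ t - Ψ t) + (A t - B t) * Ψ t‖ ≤ K * ‖Φ t - Ψ t‖ + ε * M := fun t ht ↦
    calc _ ≤ ‖A t‖ * ‖Φ t - Ψ t‖ + ‖A t - B t‖ * ‖Ψ t‖ :=
          (norm_add_le _ _).trans (add_le_add (norm_mul_le _ _) (norm_mul_le _ _))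
      _ ≤ K * ‖Φ t - Ψ t‖ + ε * M := by
          gcongr
          · exact hA t
          · exact (norm_nonneg _).trans (hAB t)
          · exact hAB t
          · exact hΨM t (Ico_subset_Icc_self ht)
  simpa using norm_le_gronwallBound_of_norm_deriv_right_le
    (fun t _ ↦ (hv t).continuousAt.continuousWithinAt) (fun t _ ↦ (hv t).hasDerivWithinAt)
    le_rfl bound T ⟨hT, le_rfl⟩

end LinearODE

theorem gronwall_perturbation_general
    (K ε : ℝ) (hK : 0 ≤ K) (hε : 0 ≤ ε)
    (A B : ℝ → Matrix (Fin 2) (Fin 2) ℝ)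
    (hAbd : ∀ t : ℝ, ‖A t‖ ≤ K) (hBbd : ∀ t : ℝ, ‖B t‖ ≤ K)
    (hAB : ∀ t : ℝ, ‖A t - B t‖ ≤ ε)
    (ΦA ΦB : ℝ → Matrix (Fin 2) (Fin 2) ℝ)
    (hΦA : ∀ t : ℝ, HasDerivAt ΦA (A t * ΦA t) t)
    (hΦB : ∀ t : ℝ, HasDerivAt ΦB (B t * ΦB t) t)
    (hΦA0 : ΦA 0 = 1) (hΦB0 : ΦB 0 = 1) :
    ∀ t : ℝ, 0 ≤ t → ‖ΦA t - ΦB t‖ ≤ ε * t * Real.exp (2 * K * t) := by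
  intro T hT
  have hΦB_le : ∀ t ∈ Icc 0 T, ‖ΦB t‖ ≤ exp (K * T) := fun t ht ↦
    calc ‖ΦB t‖ ≤ ‖ΦB 0‖ * exp (K * t) := norm_le_mul_exp_of_hasDerivAt_mul hΦB hBbd ht.1
      _ ≤ exp (K * T) := by rw [hΦB0, norm_one, one_mul]; gcongr; exact ht.2
  calc ‖ΦA T - ΦB T‖ ≤ gronwallBound ‖ΦA 0 - ΦB 0‖ K (ε * exp (K * T)) T :=
        norm_sub_le_gronwallBound_of_hasDerivAt_mul hΦA hΦB hAbd hAB hΦB_le hT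
    _ ≤ ε * exp (K * T) * T * exp (K * T) := by
        rw [hΦA0, hΦB0, sub_self, norm_zero]
        exact gronwallBound_zero_le_mul_exp hK (by positivity) T
    _ = ε * T * exp (2 * K * T) := by rw [two_mul, add_mul, exp_add]; ring

/-- Gronwall-type estimate: the fundamental solutions of two bounded linear
differential systems that are `ε`-close stay `ε·t·exp(2Kt)`-close. -/
theorem gronwall_perturbation
    (K ε : ℝ) (hK : 0 ≤ K) (hε : 0 ≤ ε)
    (A B : ℝ → Matrix (Fin 2) (Fin 2) ℝ)
    (hA : Continuous A) (hB : Continuous B)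
    (hAbd : ∀ t : ℝ, ‖A t‖ ≤ K) (hBbd : ∀ t : ℝ, ‖B t‖ ≤ K)
    (hAB : ∀ t : ℝ, ‖A t - B t‖ ≤ ε)
    (ΦA ΦB : ℝ → Matrix (Fin 2) (Fin 2) ℝ)
    (hΦA : ∀ t : ℝ, HasDerivAt ΦA (A t * ΦA t) t)
    (hΦB : ∀ t : ℝ, HasDerivAt ΦB (B t * ΦB t) t)
    (hΦA0 : ΦA 0 = 1) (hΦB0 : ΦB 0 = 1) :
    ∀ t : ℝ, 0 ≤ t → ‖ΦA t - ΦB t‖ ≤ ε * t * Real.exp (2 * K * t) :=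
  gronwall_perturbation_general K ε hK hε A B hAbd hBbd hAB ΦA ΦB hΦA hΦB hΦA0 hΦB0
end
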